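/- arXiv:math/0503127 — 3 statements merged into one kernel-verified Lean document; each statement's English description precedes it below -/
import Mathlib

section
/- An orthomodular lattice L is a Boolean algebra if and only if the Sasaki projection operation a ⩓ b := (a ⊔ bᶜ) ⊓ b is commutative, i.e., a ⩓ b = b ⩓ a for all a, b ∈ L; and in that case a ⩓ b = a ⊓ b for all a, b. -/
/-- An orthomodular lattice: a bounded lattice with an orthocomplementation
satisfying the orthomodular law. -/
class OrthomodularLattice (L : Type*) extends Lattice L, BoundedOrder L where
  ocompl : L → L
  ocompl_ocompl : ∀ a : L, ocompl (ocompl a) = a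
  ocompl_antitone : ∀ a b : L, a ≤ b → ocompl b ≤ ocompl a
  sup_ocompl : ∀ a : L, a ⊔ ocompl a = ⊤
  inf_ocompl : ∀ a : L, a ⊓ ocompl a = ⊥
  orthomodular : ∀ a b : L, a ≤ b → a ⊔ (ocompl a ⊓ b) = b

/-- The Sasaki projection `a ⩓ b = (a ⊔ bᶜ) ⊓ b`. -/
def sasaki {L : Type*} [OrthomodularLattice L] (a b : L) : L :=
  (a ⊔ OrthomodularLattice.ocompl b) ⊓ b

namespace OMLAux

open OrthomodularLattice

variable {L : Type*} [OrthomodularLattice L]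

local notation "oc" => (ocompl : L → L)

lemma le_oc_iff {a b : L} : a ≤ oc b ↔ b ≤ oc a := by
  constructor <;> intro h
  · have := ocompl_antitone _ _ h
    rwa [ocompl_ocompl] at this
  · have := ocompl_antitone _ _ h
    rwa [ocompl_ocompl] at this

lemma oc_inf (a b : L) : oc (a ⊓ b) = oc a ⊔ oc b := by
  apply le_antisymm
  · have h1 : oc (oc a ⊔ oc b) ≤ a := by
      have := ocompl_antitone (oc a) (oc a ⊔ oc b) le_sup_left
      rwa [ocompl_ocompl] at this
    have h2 : oc (oc a ⊔ oc b) ≤ b := by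
      have := ocompl_antitone (oc b) (oc a ⊔ oc b) le_sup_right
      rwa [ocompl_ocompl] at this
    rw [← ocompl_ocompl (oc a ⊔ oc b), le_oc_iff, ocompl_ocompl]
    exact le_inf h1 h2
  · exact sup_le (ocompl_antitone _ _ inf_le_left) (ocompl_antitone _ _ inf_le_right)

lemma oc_sup (a b : L) : oc (a ⊔ b) = oc a ⊓ oc b := by
  rw [← ocompl_ocompl (oc a ⊓ oc b), oc_inf, ocompl_ocompl, ocompl_ocompl]

lemma eq_bot_of_le_of_le_oc {z w : L} (h1 : z ≤ w) (h2 : z ≤ oc w) : z = ⊥ := by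
  have : z ≤ w ⊓ oc w := le_inf h1 h2
  rwa [inf_ocompl, le_bot_iff] at this

/-- From commutativity of sasaki, sasaki equals meet. -/
lemma sasaki_eq_inf (hc : ∀ a b : L, sasaki a b = sasaki b a) (a b : L) :
    sasaki a b = a ⊓ b := by
  apply le_antisymm
  · refine le_inf ?_ inf_le_right
    rw [hc]; exact inf_le_right
  · exact le_inf (le_trans inf_le_left le_sup_left) inf_le_right

/-- The commutation law. -/
lemma comm_law (hc : ∀ a b : L, sasaki a b = sasaki b a) (a b : L) :
    b = (a ⊓ b) ⊔ (oc a ⊓ b) := by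
  have h := orthomodular (a ⊓ b) b inf_le_right
  have : oc (a ⊓ b) ⊓ b = oc a ⊓ b := by
    have := sasaki_eq_inf hc (oc a) b
    rw [sasaki] at this
    rw [oc_inf]
    exact this
  rw [this] at h
  exact h.symm

lemma distrib_of_comm (hc : ∀ a b : L, sasaki a b = sasaki b a) (a b c : L) :
    a ⊓ (b ⊔ c) = (a ⊓ b) ⊔ (a ⊓ c) := by
  apply le_antisymm
  · set d := (a ⊓ b) ⊔ (a ⊓ c) with hd
    set x := a ⊓ (b ⊔ c) with hx
    set y := x ⊓ oc d with hy
    have hya : y ≤ a := le_trans inf_le_left inf_le_left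
    have hyb : y ⊓ b = ⊥ := by
      apply eq_bot_of_le_of_le_oc (w := a ⊓ b)
      · exact le_inf (le_trans inf_le_left hya) inf_le_right
      · exact le_trans inf_le_left (le_trans inf_le_right (ocompl_antitone _ _ le_sup_left))
    have hyc : y ⊓ c = ⊥ := by
      apply eq_bot_of_le_of_le_oc (w := a ⊓ c)
      · exact le_inf (le_trans inf_le_left hya) inf_le_right
      · exact le_trans inf_le_left (le_trans inf_le_right (ocompl_antitone _ _ le_sup_right))
    have hyob : y ≤ oc b := by
      have h := comm_law hc b y
      rw [inf_comm b y, hyb, bot_sup_eq] at h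
      calc y = oc b ⊓ y := h
        _ ≤ oc b := inf_le_left
    have hyoc : y ≤ oc c := by
      have h := comm_law hc c y
      rw [inf_comm c y, hyc, bot_sup_eq] at h
      calc y = oc c ⊓ y := h
        _ ≤ oc c := inf_le_left
    have hybot : y = ⊥ := by
      apply eq_bot_of_le_of_le_oc (w := b ⊔ c)
      · exact le_trans inf_le_left inf_le_right
      · rw [oc_sup]; exact le_inf hyob hyoc
    have h := comm_law hc d x
    rw [inf_comm (oc d) x, ← hy, hybot, sup_bot_eq] at h
    calc x = d ⊓ x := h
      _ ≤ d := inf_le_left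
  · exact sup_le (le_inf inf_le_left (le_trans inf_le_right le_sup_left))
      (le_inf inf_le_left (le_trans inf_le_right le_sup_right))

end OMLAux

/-- An orthomodular lattice is a Boolean algebra (i.e. distributive) iff the
Sasaki projection is commutative, in which case it coincides with the meet. -/
theorem boolean_iff_sasaki_comm {L : Type*} [OrthomodularLattice L] :
    ((∀ a b c : L, a ⊓ (b ⊔ c) = (a ⊓ b) ⊔ (a ⊓ c)) ↔
      (∀ a b : L, sasaki a b = sasaki b a)) ∧
    ((∀ a b : L, sasaki a b = sasaki b a) → ∀ a b : L, sasaki a b = a ⊓ b) := by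
  constructor
  · constructor
    · intro hd a b
      have key : ∀ a b : L, sasaki a b = a ⊓ b := by
        intro a b
        rw [sasaki, inf_comm (a ⊔ OrthomodularLattice.ocompl b) b, hd,
          OrthomodularLattice.inf_ocompl, sup_bot_eq, inf_comm b a]
      rw [key, key, inf_comm]
    · intro hc a b c
      exact OMLAux.distrib_of_comm hc a b c
  · intro hc a b
    exact OMLAux.sasaki_eq_inf hc a b
end

section
/- Let H be a complex Hilbert space with dim H ≥ 2 and let a be a normal bounded operator on H. Then a has a nontrivial closed invariant subspace (a closed subspace M with 0 ≠ M ≠ H and a(M) ⊆ M). -/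
/-!
If the spectrum of `a` is a single point `μ`, the continuous functional calculus forces `a = μ`,
and every line is invariant. Otherwise take two spectral points and continuous functions `f`, `g`
with `g * f = 0`, each nonvanishing at one of the points. Then `ker g(a)` is closed, invariant
because `g(a)` commutes with `a`, contains the range of `f(a) ≠ 0`, and is proper since
`g(a) ≠ 0`.
-/

theorem exists_continuous_mul_eq_zero {X 𝕜 : Type*} [MetricSpace X] [RCLike 𝕜] {z w : X}
    (hzw : z ≠ w) :
    ∃ f g : X → 𝕜, Continuous f ∧ Continuous g ∧ f z ≠ 0 ∧ g w ≠ 0 ∧ ∀ x, g x * f x = 0 := by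
  set φ : X → ℝ := fun x => dist x w - dist x z
  refine ⟨fun x => (max (φ x) 0 : ℝ), fun x => (max (-φ x) 0 : ℝ), by fun_prop, by fun_prop,
    ?_, ?_, fun x => ?_⟩
  · simpa [φ] using hzw
  · simpa [φ] using hzw.symm
  · rcases le_total (φ x) 0 with h | h <;> simp [h]

theorem exists_mul_eq_zero_commute_of_mem_spectrum {𝕜 A : Type*} {p : A → Prop} [RCLike 𝕜]
    [TopologicalSpace A] [Ring A] [StarRing A] [Algebra 𝕜 A]
    [ContinuousFunctionalCalculus 𝕜 A p] {a : A} (ha : p a) {z w : 𝕜}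
    (hz : z ∈ spectrum 𝕜 a) (hw : w ∈ spectrum 𝕜 a) (hzw : z ≠ w) :
    ∃ F G : A, F ≠ 0 ∧ G ≠ 0 ∧ G * F = 0 ∧ Commute a G := by
  obtain ⟨f, g, hf, hg, hfz, hgw, hgf⟩ := exists_continuous_mul_eq_zero (𝕜 := 𝕜) hzw
  have cfc_ne_zero {h : 𝕜 → 𝕜} (hh : Continuous h) {y : 𝕜} (hy : y ∈ spectrum 𝕜 a)
      (hhy : h y ≠ 0) : cfc h a ≠ 0 := by
    rw [← cfc_const_zero 𝕜 a, Ne, cfc_eq_cfc_iff_eqOn]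
    exact fun hEq => hhy (hEq hy)
  refine ⟨cfc f a, cfc g a, cfc_ne_zero hf hz hfz, cfc_ne_zero hg hw hgw, ?_, ?_⟩
  · rw [← cfc_mul g f a]
    simp [hgf]
  · simpa only [cfc_id' 𝕜 a] using cfc_commute_cfc (fun x => x) g a

namespace ContinuousLinearMap

section

variable {R E : Type*} [Semiring R] [TopologicalSpace E] [AddCommMonoid E] [Module R E]

def HasNontrivialInvariantSubspace (a : E →L[R] E) : Prop :=
  ∃ M : Submodule R E, IsClosed (M : Set E) ∧ M ≠ ⊥ ∧ M ≠ ⊤ ∧ ∀ x ∈ M, a x ∈ M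

theorem hasNontrivialInvariantSubspace_of_commute [T1Space E] {a F G : E →L[R] E}
    (hF : F ≠ 0) (hG : G ≠ 0) (hGF : G * F = 0) (hcomm : Commute a G) :
    a.HasNontrivialInvariantSubspace := by
  refine ⟨LinearMap.ker (G : E →ₗ[R] E), G.isClosed_ker, ?_, ?_, fun x hx => ?_⟩
  · obtain ⟨x, hx⟩ : ∃ x, F x ≠ 0 := by
      by_contra! h
      exact hF (ext h)
    refine (Submodule.ne_bot_iff _).mpr ⟨F x, ?_, hx⟩
    simpa using congr($hGF x)
  · rw [Ne, LinearMap.ker_eq_top]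
    exact fun h => hG (coe_injective h)
  · have : G (a x) = a (G x) := congr($hcomm.eq x).symm
    simp_all

end

theorem hasNontrivialInvariantSubspace_algebraMap {𝕜 E : Type*}
    [NontriviallyNormedField 𝕜] [CompleteSpace 𝕜] [NormedAddCommGroup E] [NormedSpace 𝕜 E]
    (hdim : 2 ≤ Module.rank 𝕜 E) (μ : 𝕜) :
    (algebraMap 𝕜 (E →L[𝕜] E) μ).HasNontrivialInvariantSubspace := by
  have : Nontrivial E := rank_pos_iff_nontrivial.mp (lt_of_lt_of_le (by norm_num) hdim)
  obtain ⟨x, hx⟩ := exists_ne (0 : E)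
  refine ⟨𝕜 ∙ x, Submodule.closed_of_finiteDimensional _, by simpa using hx, fun htop => ?_,
    fun y hy => by simpa [Algebra.algebraMap_eq_smul_one] using Submodule.smul_mem _ μ hy⟩
  have := rank_span_le (R := 𝕜) ({x} : Set E)
  rw [htop, rank_top] at this
  exact absurd (hdim.trans (by simpa using this)) (by norm_num)

end ContinuousLinearMap

open ContinuousLinearMap in
/-- Every normal bounded operator on a complex Hilbert space of dimension at
least two has a nontrivial closed invariant subspace. -/
theorem normal_invariant_subspace {H : Type*} [NormedAddCommGroup H]
    [InnerProductSpace ℂ H] [CompleteSpace H]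
    (hdim : 2 ≤ Module.rank ℂ H)
    (a : H →L[ℂ] H) (hnormal : a ∘L adjoint a = adjoint a ∘L a) :
    ∃ M : Submodule ℂ H, IsClosed (M : Set H) ∧ M ≠ ⊥ ∧ M ≠ ⊤ ∧
      ∀ x ∈ M, a x ∈ M := by
  have : Nontrivial H := rank_pos_iff_nontrivial.mp (lt_of_lt_of_le (by norm_num) hdim)
  have ha : IsStarNormal a := ⟨by rw [commute_iff_eq, star_eq_adjoint]; exact hnormal.symm⟩
  rcases (spectrum ℂ a).subsingleton_or_nontrivial with hsub | ⟨z, hz, w, hw, hzw⟩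
  · obtain ⟨μ, hμ⟩ := spectrum.nonempty a
    rw [CFC.eq_algebraMap_of_spectrum_subset_singleton a μ fun x hx => hsub hx hμ]
    exact hasNontrivialInvariantSubspace_algebraMap hdim μ
  · obtain ⟨F, G, hF, hG, hGF, hcomm⟩ := exists_mul_eq_zero_commute_of_mem_spectrum ha hz hw hzw
    exact hasNontrivialInvariantSubspace_of_commute hF hG hGF hcomm
end

section
/- Let L be an orthomodular lattice in which the Sasaki operation a ⩓ b := (a ⊔ bᶜ) ⊓ b satisfies a ⩓ b = b ⩓ a for all a, b. Then L is distributive. -/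
namespace OrthomodularLattice

variable {L : Type*} [OrthomodularLattice L]

/-- Under Sasaki commutativity, the Sasaki projection is just the meet. -/
lemma sasaki_eq_inf (hcomm : ∀ a b : L, sasaki a b = sasaki b a) (a b : L) :
    sasaki a b = a ⊓ b := by
  apply le_antisymm
  · refine le_inf ?_ ?_
    · rw [hcomm]; exact inf_le_right
    · exact inf_le_right
  · exact le_inf (le_sup_of_le_left inf_le_left) inf_le_right

lemma le_ocompl_of_inf_eq_bot (hcomm : ∀ a b : L, sasaki a b = sasaki b a)
    {e b : L} (h : e ⊓ b = ⊥) : e ≤ ocompl b := by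
  have hs : (b ⊔ ocompl e) ⊓ e = ⊥ := by
    have := sasaki_eq_inf hcomm b e
    rw [sasaki] at this
    rw [this, inf_comm, h]
  have hom := orthomodular (ocompl e) (b ⊔ ocompl e) le_sup_right
  rw [ocompl_ocompl, inf_comm, hs, sup_bot_eq] at hom
  have hb : b ≤ ocompl e := by rw [hom]; exact le_sup_left
  have := ocompl_antitone _ _ hb
  rwa [ocompl_ocompl] at this

end OrthomodularLattice

/-- If the Sasaki projection is commutative on an orthomodular lattice `L`,
then `L` is distributive. -/
theorem distrib_of_sasaki_comm {L : Type*} [OrthomodularLattice L]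
    (hcomm : ∀ a b : L, sasaki a b = sasaki b a) :
    ∀ a b c : L, a ⊓ (b ⊔ c) = (a ⊓ b) ⊔ (a ⊓ c) := by
  open OrthomodularLattice in
  intro a b c
  set d := (a ⊓ b) ⊔ (a ⊓ c) with hd
  have hdle : d ≤ a ⊓ (b ⊔ c) :=
    sup_le (le_inf inf_le_left (le_trans inf_le_right le_sup_left))
      (le_inf inf_le_left (le_trans inf_le_right le_sup_right))
  set e := ocompl d ⊓ a with he
  have heb : e ⊓ b = ⊥ := by
    have h1 : e ⊓ b ≤ d ⊓ ocompl d :=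
      le_inf (le_trans (inf_le_inf_right b inf_le_right) le_sup_left)
        (le_trans inf_le_left inf_le_left)
    rw [inf_ocompl] at h1
    exact le_bot_iff.mp h1
  have hec : e ⊓ c = ⊥ := by
    have h1 : e ⊓ c ≤ d ⊓ ocompl d :=
      le_inf (le_trans (inf_le_inf_right c inf_le_right) le_sup_right)
        (le_trans inf_le_left inf_le_left)
    rw [inf_ocompl] at h1
    exact le_bot_iff.mp h1
  have h1 : e ≤ ocompl b := le_ocompl_of_inf_eq_bot hcomm heb
  have h2 : e ≤ ocompl c := le_ocompl_of_inf_eq_bot hcomm hec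
  have hbc : b ⊔ c ≤ ocompl e := by
    apply sup_le
    · have := ocompl_antitone _ _ h1; rwa [ocompl_ocompl] at this
    · have := ocompl_antitone _ _ h2; rwa [ocompl_ocompl] at this
  have hkey : ocompl d ⊓ (a ⊓ (b ⊔ c)) = ⊥ := by
    have : ocompl d ⊓ (a ⊓ (b ⊔ c)) ≤ e ⊓ ocompl e := by
      rw [← inf_assoc]
      exact le_inf inf_le_left (le_trans inf_le_right hbc)
    rw [inf_ocompl] at this
    exact le_bot_iff.mp this
  have hom := OrthomodularLattice.orthomodular d (a ⊓ (b ⊔ c)) hdle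
  rw [hkey, sup_bot_eq] at hom
  exact hom.symm
end
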